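/- arXiv:2103.07304 — 3 statements merged into one kernel-verified Lean document; each statement's English description precedes it below -/
import Mathlib

section
/- If α > 0, β > 0, and v : ℝ → ℝ² solves the ODE v' = (α − β|v|²)·v with initial condition v(0) = ν·w where |w| = √(α/β) and 0 < ν < 1, then v(t) → w as t → ∞. -/
/-! Along the ray through `w` the equation reduces to the scalar Bernoulli equation
`g' = α (1 - g²) g`, whose solution with `g 0 = ν` is `g t = (1 + (ν⁻² - 1) e^{-2αt})^{-1/2}`:
it exists for all times because `ν ≤ 1`, and tends to `1`. The vector field is `C¹`, hence locally
Lipschitz, so `t ↦ g t • w` is the only solution through `ν • w`, and it tends to `w`. -/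

open Filter Set Real Topology

theorem ODE_solution_unique_univ_of_locallyLipschitz {E : Type*} [NormedAddCommGroup E]
    [NormedSpace ℝ E] {F : E → E} (hF : LocallyLipschitz F) {f g : ℝ → E} {t₀ : ℝ}
    (hf : ∀ t, HasDerivAt f (F (f t)) t) (hg : ∀ t, HasDerivAt g (F (g t)) t)
    (heq : f t₀ = g t₀) : f = g := by
  ext t
  obtain ⟨a, b, ht, ht₀⟩ : ∃ a b, t ∈ Ioo a b ∧ t₀ ∈ Ioo a b :=
    ⟨min t t₀ - 1, max t t₀ + 1, by constructor <;> constructor <;> grind⟩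
  set s := f '' Icc a b ∪ g '' Icc a b
  have hs : IsCompact s :=
    (isCompact_Icc.image_of_continuousOn fun u _ ↦ (hf u).continuousAt.continuousWithinAt).union
      (isCompact_Icc.image_of_continuousOn fun u _ ↦ (hg u).continuousAt.continuousWithinAt)
  obtain ⟨K, hK⟩ := hF.locallyLipschitzOn.exists_lipschitzOnWith_of_compact hs
  exact ODE_solution_unique_of_mem_Ioo (s := fun _ ↦ s) (fun _ _ ↦ hK) ht₀
    (fun u hu ↦ ⟨hf u, .inl (mem_image_of_mem f (Ioo_subset_Icc_self hu))⟩)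
    (fun u hu ↦ ⟨hg u, .inr (mem_image_of_mem g (Ioo_subset_Icc_self hu))⟩) heq ht

theorem locallyLipschitz_sub_mul_norm_sq_smul {E : Type*} [NormedAddCommGroup E]
    [InnerProductSpace ℝ E] (α β : ℝ) :
    LocallyLipschitz fun x : E ↦ (α - β * ‖x‖ ^ 2) • x :=
  ContDiff.locallyLipschitz (𝕂 := ℝ)
    ((contDiff_const.sub (contDiff_const.mul (contDiff_norm_sq ℝ))).smul contDiff_id)

noncomputable def logisticSpeed (α K t : ℝ) : ℝ :=
  (√(1 + K * exp (-(2 * α * t))))⁻¹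

section logisticSpeed

variable {α K : ℝ}

lemma hasDerivAt_logisticSpeed (hK : 0 ≤ K) (t : ℝ) :
    HasDerivAt (logisticSpeed α K)
      (α * (1 - logisticSpeed α K t ^ 2) * logisticSpeed α K t) t := by
  have hφ : HasDerivAt (fun t ↦ 1 + K * exp (-(2 * α * t)))
      (K * (exp (-(2 * α * t)) * -(2 * α))) t :=
    (((hasDerivAt_id t).const_mul (2 * α)).fun_neg.exp.const_mul K |>.const_add 1).congr_deriv
      (by simp)
  have hpos : 0 < 1 + K * exp (-(2 * α * t)) := by positivity
  refine ((hφ.sqrt hpos.ne').inv (sqrt_pos.2 hpos).ne').congr_deriv ?_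
  have hsq := sq_sqrt hpos.le
  simp only [logisticSpeed]
  field_simp
  rw [hsq]
  ring

lemma logisticSpeed_zero {ν : ℝ} (hν : 0 < ν) : logisticSpeed α (ν⁻¹ ^ 2 - 1) 0 = ν := by
  simp [logisticSpeed, sqrt_sq hν.le]

lemma tendsto_logisticSpeed (hα : 0 < α) : Tendsto (logisticSpeed α K) atTop (𝓝 1) := by
  have hexp : Tendsto (fun t ↦ exp (-(2 * α * t))) atTop (𝓝 0) :=
    tendsto_exp_atBot.comp <|
      tendsto_neg_atTop_atBot.comp (tendsto_id.const_mul_atTop (by positivity))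
  unfold logisticSpeed
  simpa using ((hexp.const_mul K).const_add 1).sqrt.inv₀ (by simp)

end logisticSpeed

theorem hasDerivAt_smul_const_of_logistic {E : Type*} [NormedAddCommGroup E] [NormedSpace ℝ E]
    {α β : ℝ} {g : ℝ → ℝ} {w : E} (hw : β * ‖w‖ ^ 2 = α)
    (hg : ∀ t, HasDerivAt g (α * (1 - g t ^ 2) * g t) t) (t : ℝ) :
    HasDerivAt (fun t ↦ g t • w) ((α - β * ‖g t • w‖ ^ 2) • g t • w) t := by
  convert (hg t).smul_const w using 1
  rw [smul_smul, norm_smul, mul_pow, norm_eq_abs, sq_abs, ← hw]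
  ring_nf

theorem stmt1 (α β ν : ℝ) (hα : 0 < α) (hβ : 0 < β) (hν : 0 < ν) (hν1 : ν < 1)
    (v : ℝ → EuclideanSpace ℝ (Fin 2)) (w : EuclideanSpace ℝ (Fin 2))
    (hw : ‖w‖ = Real.sqrt (α / β))
    (hode : ∀ t, HasDerivAt v ((α - β * ‖v t‖ ^ 2) • v t) t)
    (h0 : v 0 = ν • w) :
    Filter.Tendsto v Filter.atTop (nhds w) := by
  have hK : 0 ≤ ν⁻¹ ^ 2 - 1 := by
    have := one_le_inv₀ hν |>.2 hν1.le
    nlinarith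
  have hw2 : β * ‖w‖ ^ 2 = α := by
    rw [hw, sq_sqrt (by positivity)]
    field_simp
  have hv : v = fun t ↦ logisticSpeed α (ν⁻¹ ^ 2 - 1) t • w :=
    ODE_solution_unique_univ_of_locallyLipschitz (locallyLipschitz_sub_mul_norm_sq_smul α β)
      hode (hasDerivAt_smul_const_of_logistic hw2 (hasDerivAt_logisticSpeed hK)) (t₀ := 0)
      (by rw [h0, logisticSpeed_zero hν])
  rw [hv]
  simpa using (tendsto_logisticSpeed hα).smul_const w
end

section
/- Consider the matrix A = [[0, √(α/β), 0], [−ω/R − φ'(0)·√(α/β), 0, 2/R], [0, −φ(0), −2α]] with α, β, R > 0, φ(0) > 0, and ω = √(α/β)/R = φ(0)·√(β/α). Its characteristic polynomial is λ³ + a₂λ² + a₁λ + a₀ with a₂ = 2α, a₁ = (ω/R + φ'(0)√(α/β))·√(α/β) + 2φ(0)/R, a₀ = 2α·(ω/R + φ'(0)√(α/β))·√(α/β). If ω/R + √(α/β)·φ'(0) > 0, then all eigenvalues of A have negative real part. -/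
/-!
The Routh–Hurwitz conditions for the characteristic cubic hold: `a₂ = 2α` and
`a₀ = a₂ · k` with `k = (ω/R + φ'(0)√(α/β))√(α/β) > 0`, while `a₁ = k + 2φ(0)/R`, so
`a₂a₁ − a₀ = 4αφ(0)/R > 0`.
-/

open Polynomial

theorem Complex.re_neg_of_cubic_eq_zero {a b c : ℝ} (ha : 0 < a) (hc : 0 < c) (hab : c < a * b)
    {z : ℂ} (hz : z ^ 3 + a * z ^ 2 + b * z + c = 0) : z.re < 0 := by
  have hb : 0 < b := by nlinarith
  obtain ⟨x, y⟩ := z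
  have hre : x ^ 3 - 3 * x * y ^ 2 + a * (x ^ 2 - y ^ 2) + b * x + c = 0 := by
    have := congrArg Complex.re hz
    simp only [pow_succ, pow_zero, one_mul, add_re, mul_re, mul_im, ofReal_re, ofReal_im, zero_mul,
      sub_zero, zero_re] at this
    linarith
  have him : y * (3 * x ^ 2 - y ^ 2 + 2 * a * x + b) = 0 := by
    have := congrArg Complex.im hz
    simp only [pow_succ, pow_zero, one_mul, add_im, mul_im, mul_re, ofReal_re, ofReal_im, zero_mul,
      add_zero, zero_im] at this
    linarith
  change x < 0
  by_contra! hx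
  -- A root in the closed right half-plane is either real, where every term is nonnegative, or
  -- satisfies the quadratic `him`; eliminating `y ^ 2` with it makes `c - a * b` nonnegative.
  rcases mul_eq_zero.mp him with rfl | hy
  · nlinarith [pow_nonneg hx 3, pow_nonneg hx 2]
  · have hgap : c - a * b = 2 * x * ((2 * x + a) ^ 2 + b) := by
      linear_combination hre - (3 * x + a) * hy
    have : 0 ≤ 2 * x * ((2 * x + a) ^ 2 + b) := by positivity
    linarith

theorem Matrix.charpoly_tridiagonal_fin_three {R : Type*} [CommRing R] (a e d p q s t : R) :
    (!![a, p, 0; q, e, s; 0, t, d]).charpoly =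
      (X - C a) * ((X - C e) * (X - C d) - C (s * t)) - C (p * q) * (X - C d) := by
  rw [Matrix.charpoly, Matrix.det_fin_three]
  simp only [Fin.isValue, charmatrix_apply_eq, charmatrix_apply_ne, ne_eq, Fin.reduceEq,
    not_false_eq_true, of_apply, cons_val', cons_val_zero, cons_val_one, cons_val, cons_val_fin_one,
    map_zero, neg_zero, map_mul]
  ring

theorem Matrix.re_neg_of_mem_spectrum_of_charpoly_eq_cubic {n : Type*} [Fintype n]
    [DecidableEq n] {M : Matrix n n ℝ} {a b c : ℝ} (ha : 0 < a) (hc : 0 < c) (hab : c < a * b)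
    (hM : M.charpoly = X ^ 3 + C a * X ^ 2 + C b * X + C c) {μ : ℂ}
    (hμ : μ ∈ spectrum ℂ (M.map (algebraMap ℝ ℂ))) : μ.re < 0 := by
  rw [Matrix.mem_spectrum_iff_isRoot_charpoly, Matrix.charpoly_map, hM] at hμ
  exact Complex.re_neg_of_cubic_eq_zero ha hc hab (by simpa using hμ)

theorem stmt14_general (α β R ω φ0 φ'0 : ℝ) (hα : 0 < α) (hβ : 0 < β) (hR : 0 < R)
    (hφ0 : 0 < φ0)
    (A : Matrix (Fin 3) (Fin 3) ℝ)
    (hA : A = !![0, Real.sqrt (α / β), 0;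
                 -(ω / R) - φ'0 * Real.sqrt (α / β), 0, 2 / R;
                 0, -φ0, -2 * α]) :
    A.charpoly = X ^ 3 + C (2 * α) * X ^ 2
        + C ((ω / R + φ'0 * Real.sqrt (α / β)) * Real.sqrt (α / β) + 2 * φ0 / R) * X
        + C (2 * α * ((ω / R + φ'0 * Real.sqrt (α / β)) * Real.sqrt (α / β))) ∧
    (0 < ω / R + Real.sqrt (α / β) * φ'0 →
      ∀ μ : ℂ, μ ∈ spectrum ℂ (A.map (algebraMap ℝ ℂ)) → μ.re < 0) := by
  have hchar : A.charpoly = X ^ 3 + C (2 * α) * X ^ 2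
      + C ((ω / R + φ'0 * Real.sqrt (α / β)) * Real.sqrt (α / β) + 2 * φ0 / R) * X
      + C (2 * α * ((ω / R + φ'0 * Real.sqrt (α / β)) * Real.sqrt (α / β))) := by
    rw [hA, Matrix.charpoly_tridiagonal_fin_three]
    simp only [div_eq_mul_inv, map_add, map_sub, map_mul, map_neg, map_zero, map_ofNat]
    ring
  refine ⟨hchar, fun hstable μ hμ => ?_⟩
  have hk : 0 < (ω / R + φ'0 * Real.sqrt (α / β)) * Real.sqrt (α / β) :=
    mul_pos (by linarith) (by positivity)
  have hgap : 0 < 2 * α * (2 * φ0 / R) := by positivity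
  refine Matrix.re_neg_of_mem_spectrum_of_charpoly_eq_cubic (by positivity) (by positivity) ?_
    hchar hμ
  linarith

theorem stmt14 (α β R ω φ0 φ'0 : ℝ) (hα : 0 < α) (hβ : 0 < β) (hR : 0 < R)
    (hφ0 : 0 < φ0)
    (hω1 : ω = Real.sqrt (α / β) / R) (hω2 : ω = φ0 * Real.sqrt (β / α))
    (A : Matrix (Fin 3) (Fin 3) ℝ)
    (hA : A = !![0, Real.sqrt (α / β), 0;
                 -(ω / R) - φ'0 * Real.sqrt (α / β), 0, 2 / R;
                 0, -φ0, -2 * α]) :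
    A.charpoly = X ^ 3 + C (2 * α) * X ^ 2
        + C ((ω / R + φ'0 * Real.sqrt (α / β)) * Real.sqrt (α / β) + 2 * φ0 / R) * X
        + C (2 * α * ((ω / R + φ'0 * Real.sqrt (α / β)) * Real.sqrt (α / β))) ∧
    (0 < ω / R + Real.sqrt (α / β) * φ'0 →
      ∀ μ : ℂ, μ ∈ spectrum ℂ (A.map (algebraMap ℝ ℂ)) → μ.re < 0) :=
  stmt14_general α β R ω φ0 φ'0 hα hβ hR hφ0 A hA
end

section
/- Let x₁,…,x_N ∈ ℝ² with 0 not on any line through a pair of distinct points x_i, x_j, and let x₁ have maximal norm among the x_i. Let R ≥ |x₁| and set x̃₁ = R·x₁/|x₁|. Then for every τ ∈ [0,1] and every j ≠ 1, the distance |x_j − (x₁ + τ(x̃₁ − x₁))| is nondecreasing in τ; in particular it is at least |x_j − x₁|. -/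
open Set

section RadialPush

variable {E : Type*} [NormedAddCommGroup E] [InnerProductSpace ℝ E]

lemma norm_sub_smul_sq (y v : E) (s : ℝ) :
    ‖y - s • v‖ ^ 2 = ‖y‖ ^ 2 - 2 * s * inner ℝ y v + s ^ 2 * ‖v‖ ^ 2 := by
  rw [norm_sub_sq_real, real_inner_smul_right, norm_smul, Real.norm_eq_abs, mul_pow, sq_abs]
  ring

/-- `‖y - s • v‖ ^ 2` is a quadratic in `s` with vertex `⟪y, v⟫ / ‖v‖ ^ 2 ≤ ‖y‖ / ‖v‖ ≤ 1`. -/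
lemma monotoneOn_norm_sub_smul_Ici_one {y v : E} (hyv : ‖y‖ ≤ ‖v‖) :
    MonotoneOn (fun s : ℝ => ‖y - s • v‖) (Ici 1) := by
  intro s₁ (hs₁ : 1 ≤ s₁) s₂ _ hs
  have hinner : inner ℝ y v ≤ ‖v‖ ^ 2 :=
    (real_inner_le_norm y v).trans (by nlinarith [norm_nonneg y, norm_nonneg v])
  have hsq : ‖y - s₁ • v‖ ^ 2 ≤ ‖y - s₂ • v‖ ^ 2 := by
    rw [norm_sub_smul_sq, norm_sub_smul_sq]
    nlinarith [mul_nonneg (sub_nonneg.2 hs) (sub_nonneg.2 hinner),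
      mul_nonneg (mul_nonneg (sub_nonneg.2 hs) (by linarith : (0 : ℝ) ≤ s₁ + s₂ - 2))
        (sq_nonneg ‖v‖)]
  exact (sq_le_sq₀ (norm_nonneg _) (norm_nonneg _)).1 hsq

lemma monotoneOn_norm_sub_radial_push {y v : E} {R : ℝ} (hyv : ‖y‖ ≤ ‖v‖) (hR : ‖v‖ ≤ R) :
    MonotoneOn (fun τ : ℝ => ‖y - (v + τ • ((R / ‖v‖) • v - v))‖) (Ici 0) := by
  rcases eq_or_ne v 0 with rfl | hv
  · simpa using monotoneOn_const
  have hc : 1 ≤ R / ‖v‖ := (one_le_div (norm_pos_iff.2 hv)).2 hR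
  have hpath : ∀ τ : ℝ, v + τ • ((R / ‖v‖) • v - v) = (1 + τ * (R / ‖v‖ - 1)) • v := by
    intro τ
    rw [add_smul, one_smul, ← smul_smul, sub_smul, one_smul]
  simp only [hpath]
  refine (monotoneOn_norm_sub_smul_Ici_one hyv).comp (fun τ _ τ' _ h => ?_) fun τ hτ => ?_
  · gcongr
  · exact le_add_of_nonneg_right (mul_nonneg hτ (sub_nonneg.2 hc))

end RadialPush

theorem stmt17_general (N : ℕ) (x : Fin N → EuclideanSpace ℝ (Fin 2)) (R : ℝ)
    (i₀ : Fin N)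
    (hmax : ∀ i, ‖x i‖ ≤ ‖x i₀‖)
    (hR : ‖x i₀‖ ≤ R)
    (x' : EuclideanSpace ℝ (Fin 2)) (hx' : x' = (R / ‖x i₀‖) • x i₀) :
    ∀ j, j ≠ i₀ →
      MonotoneOn (fun τ : ℝ => ‖x j - (x i₀ + τ • (x' - x i₀))‖) (Set.Icc 0 1) ∧
      ∀ τ ∈ Set.Icc (0 : ℝ) 1, ‖x j - x i₀‖ ≤ ‖x j - (x i₀ + τ • (x' - x i₀))‖ := by
  intro j _
  subst hx'
  have hmono := monotoneOn_norm_sub_radial_push (hmax j) hR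
  refine ⟨hmono.mono Icc_subset_Ici_self, fun τ hτ => ?_⟩
  simpa using hmono self_mem_Ici hτ.1 hτ.1

theorem stmt17 (N : ℕ) (x : Fin N → EuclideanSpace ℝ (Fin 2)) (R : ℝ)
    (i₀ : Fin N)
    (hline : ∀ i j, i ≠ j → ∀ c : ℝ, c • x i + (1 - c) • x j ≠ 0)
    (hmax : ∀ i, ‖x i‖ ≤ ‖x i₀‖)
    (hR : ‖x i₀‖ ≤ R)
    (x' : EuclideanSpace ℝ (Fin 2)) (hx' : x' = (R / ‖x i₀‖) • x i₀) :
    ∀ j, j ≠ i₀ →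
      MonotoneOn (fun τ : ℝ => ‖x j - (x i₀ + τ • (x' - x i₀))‖) (Set.Icc 0 1) ∧
      ∀ τ ∈ Set.Icc (0 : ℝ) 1, ‖x j - x i₀‖ ≤ ‖x j - (x i₀ + τ • (x' - x i₀))‖ :=
  stmt17_general N x R i₀ hmax hR x' hx'
end
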